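/- arXiv:1711.00461 — 3 statements merged into one kernel-verified Lean document; each statement's English description precedes it below -/
import Mathlib

section
/- Let K be the boundary complex of a hexagon: the simplicial complex on [6] whose faces are ∅, the six singletons, and the six edges {1,2},{2,3},{3,4},{4,5},{5,6},{6,1} (so its minimal non-faces are {1,3},{1,4},{1,5},{2,4},{2,5},{2,6},{3,5},{3,6},{4,6}). For j = 1,2,3 let α_j ∈ H^3(R(K),d) be the class of the cocycle v_j u_{j+3}. Then the triple Massey product ⟨α_1,α_2,α_3⟩ ⊆ H^8(R(K),d) is defined, it contains the zero class, and it also contains a nonzero class; in particular it is defined but not strictly defined. -/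
/-!
Fix `c₁₃ = v₁u₄u₂u₅` (vertices `1, …, 6` around the hexagon; the Lean indices are one less).
The two choices `c₂₄ = v₂u₅u₃u₆` and `c₂₄ = v₃u₅u₂u₆` give defining systems with values
`v₁v₂u₄u₅u₃u₆` and `0`, because `v₁v₃ = 0`.

The first value is not exact. The fundamental cycle `c` of the hexagon defines a linear functional
on the free algebra: a word in which every vertex occurs exactly once gets the weight `c σ` times
the sign of the order of its `u`-letters, where `σ` is the set of its `v`-letters; all other words
get `0`. This respects the relations of `R(K)`, since `c` is supported on faces. The Leibniz rule
writes `d` of a word as a signed sum over its `u`-letters, and the functional kills each such sum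
because `c` is a cycle. The functional takes the value `1` on `v₁v₂u₄u₅u₃u₆`.
-/

namespace MasseyPaper

/-- An abstract simplicial complex on the vertex type `V` (no ghost vertices). -/
structure SComplex (V : Type) [DecidableEq V] : Type where
  faces : Set (Finset V)
  empty_mem : ∅ ∈ faces
  down_closed : ∀ ⦃σ τ : Finset V⦄, σ ∈ faces → τ ⊆ σ → τ ∈ faces
  singleton_mem : ∀ v : V, ({v} : Finset V) ∈ faces

variable {V : Type} [DecidableEq V]

/-- `I` is a minimal non-face of `K`. -/
def IsMNF (K : SComplex V) (I : Finset V) : Prop :=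
  I ∉ K.faces ∧ ∀ J : Finset V, J ⊂ I → J ∈ K.faces

/-- The free `ℚ`-algebra on generators `u_i` (`Sum.inl i`) and `v_i` (`Sum.inr i`). -/
abbrev FA (V : Type) : Type := FreeAlgebra ℚ (V ⊕ V)

def uF (i : V) : FA V := FreeAlgebra.ι ℚ (Sum.inl i)
def vF (i : V) : FA V := FreeAlgebra.ι ℚ (Sum.inr i)

/-- The relations defining the Koszul cochain algebra `R(K)`:
graded commutativity of the generators, `v_i² = u_i v_i = 0` and
the squarefree monomials corresponding to minimal non-faces of `K`. -/
inductive RKRel (K : SComplex V) : FA V → FA V → Prop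
  | ucomm (i j : V) : RKRel K (uF i * uF j) (-(uF j * uF i))
  | vcomm (i j : V) : RKRel K (vF i * vF j) (vF j * vF i)
  | uvcomm (i j : V) : RKRel K (uF i * vF j) (vF j * uF i)
  | vsq (i : V) : RKRel K (vF i * vF i) 0
  | uv (i : V) : RKRel K (uF i * vF i) 0
  | mnf (l : List V) : l.Nodup → IsMNF K l.toFinset → RKRel K ((l.map vF).prod) 0

/-- The Koszul cochain algebra `R(K)` over `ℚ`. -/
abbrev RK (K : SComplex V) : Type := RingQuot (RKRel K)

def mkRK (K : SComplex V) : FA V →ₐ[ℚ] RK K := RingQuot.mkAlgHom ℚ (RKRel K)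

/-- The exterior generator `u_i ∈ R(K)`, of degree 1. -/
def uK (K : SComplex V) (i : V) : RK K := mkRK K (uF i)

/-- The polynomial generator `v_i ∈ R(K)`, of degree 2. -/
def vK (K : SComplex V) (i : V) : RK K := mkRK K (vF i)

def genDeg (g : V ⊕ V) : ℕ := Sum.elim (fun _ => 1) (fun _ => 2) g
def genIdx (g : V ⊕ V) : V := Sum.elim id id g

def listMon (K : SComplex V) (l : List (V ⊕ V)) : RK K :=
  (l.map fun g => mkRK K (FreeAlgebra.ι ℚ g)).prod

/-- The homogeneous component of total degree `n` of `R(K)`. -/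
def gradePiece (K : SComplex V) (n : ℕ) : Submodule ℚ (RK K) :=
  Submodule.span ℚ {x | ∃ l : List (V ⊕ V), (l.map genDeg).sum = n ∧ x = listMon K l}

/-- The homogeneous component of total degree `n` and multidegree `J` of `R(K)`. -/
def mGradePiece (K : SComplex V) (n : ℕ) (J : V → ℕ) : Submodule ℚ (RK K) :=
  Submodule.span ℚ {x | ∃ l : List (V ⊕ V), (l.map genDeg).sum = n ∧
    (∀ w : V, (l.map genIdx).count w = J w) ∧ x = listMon K l}

/-- Homogeneity predicate for the total grading of `R(K)`. -/
def totalHomog (K : SComplex V) (n : ℕ) (x : RK K) : Prop := x ∈ gradePiece K n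

/-- `d` is the Koszul differential of `R(K)`: the (unique) graded derivation with
`d u_i = v_i`, `d v_i = 0`; it preserves the multigrading and raises total degree by one. -/
def IsKoszulDiff (K : SComplex V) (d : RK K →ₗ[ℚ] RK K) : Prop :=
  (∀ i : V, d (uK K i) = vK K i) ∧
  (∀ i : V, d (vK K i) = 0) ∧
  (∀ n : ℕ, ∀ a ∈ gradePiece K n, ∀ b : RK K,
      d (a * b) = d a * b + ((-1 : ℚ) ^ n) • (a * d b)) ∧
  (∀ (n : ℕ) (J : V → ℕ), ∀ a ∈ mGradePiece K n J, d a ∈ mGradePiece K (n + 1) J)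

/-- The degree of the entry `c i j` of a defining system for classes of degrees `n 1, …, n k`:
`n i + n (i+1) + ⋯ + n (j-1) − (j − i) + 1`. -/
def sysDeg (n : ℕ → ℕ) (i j : ℕ) : ℕ := (∑ q ∈ Finset.Ico i j, n q) - (j - i) + 1

/-- A defining system for the `k`-fold Massey product of the classes of the cocycles
`a 1, …, a k`, of degrees `n 1, …, n k`, in a cochain DGA with differential `d` and
homogeneity predicate `homog`. -/
structure DefSys {A : Type} [Ring A] [Module ℚ A] (d : A → A) (homog : ℕ → A → Prop)
    (k : ℕ) (n : ℕ → ℕ) (a : ℕ → A) : Type where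
  c : ℕ → ℕ → A
  homog_c : ∀ i j : ℕ, 1 ≤ i → i < j → j ≤ k + 1 → (i, j) ≠ (1, k + 1) →
    homog (sysDeg n i j) (c i j)
  c_diag : ∀ i : ℕ, 1 ≤ i → i ≤ k → c i (i + 1) = a i
  d_c : ∀ i j : ℕ, 1 ≤ i → i < j → j ≤ k + 1 → (i, j) ≠ (1, k + 1) →
    d (c i j) = ∑ p ∈ Finset.Ioo i j, ((-1 : ℚ) ^ sysDeg n i p) • (c i p * c p j)

/-- The cocycle `a(C)` associated to a defining system `C`. -/
def DefSys.val {A : Type} [Ring A] [Module ℚ A] {d : A → A} {homog : ℕ → A → Prop}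
    {k : ℕ} {n : ℕ → ℕ} {a : ℕ → A} (C : DefSys d homog k n a) : A :=
  -∑ p ∈ Finset.Ioo 1 (k + 1), ((-1 : ℚ) ^ sysDeg n 1 p) • (C.c 1 p * C.c p (k + 1))

/-- The `k`-fold Massey product `⟨[a 1], …, [a k]⟩` is defined. -/
def MasseyDefined {A : Type} [Ring A] [Module ℚ A] (d : A → A) (homog : ℕ → A → Prop)
    (k : ℕ) (n : ℕ → ℕ) (a : ℕ → A) : Prop :=
  Nonempty (DefSys d homog k n a)

/-- The `k`-fold Massey product `⟨[a 1], …, [a k]⟩` is strictly defined: the values of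
any two defining systems are cohomologous, i.e. it consists of a single cohomology class. -/
def MasseyStrict {A : Type} [Ring A] [Module ℚ A] (d : A → A) (homog : ℕ → A → Prop)
    (k : ℕ) (n : ℕ → ℕ) (a : ℕ → A) : Prop :=
  ∀ C C' : DefSys d homog k n a, ∃ z : A, C.val - C'.val = d z

/-- The `k`-fold Massey product `⟨[a 1], …, [a k]⟩` is nontrivial: it does not
contain the zero cohomology class. -/
def MasseyNontrivial {A : Type} [Ring A] [Module ℚ A] (d : A → A) (homog : ℕ → A → Prop)
    (k : ℕ) (n : ℕ → ℕ) (a : ℕ → A) : Prop :=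
  ∀ C : DefSys d homog k n a, ¬ ∃ z : A, C.val = d z



/-- The boundary complex of a hexagon: the simplicial complex on `[6]` (0-indexed)
whose faces are `∅`, the six vertices, and the six edges `{i, i+1}` (mod 6). -/
def hexagon : SComplex (Fin 6) where
  faces := {σ | ∃ i : Fin 6, σ ⊆ {i, i + 1}}
  empty_mem := ⟨0, by simp⟩
  down_closed := by
    intro σ τ hσ hsub
    obtain ⟨i, hi⟩ := hσ
    exact ⟨i, hsub.trans hi⟩
  singleton_mem := by
    intro v
    exact ⟨v, by simp⟩

/-- The cocycle `v_j u_{j+3} ∈ R(K)` for the hexagon (`1 ≤ j ≤ 3`, written 0-indexed),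
representing `α_j ∈ H^3(R(K), d)`. -/
def hexClass (j : ℕ) : RK hexagon :=
  open Fin.NatCast in
  vK hexagon ((j - 1 : ℕ) : Fin 6) * uK hexagon ((j + 2 : ℕ) : Fin 6)

end MasseyPaper

namespace List

variable {α : Type*} [LinearOrder α]

def invCount : List α → ℕ
  | [] => 0
  | a :: t => t.countP (· < a) + invCount t

theorem invCount_append_cons (q₁ q₂ : List α) (x : α) :
    invCount (q₁ ++ x :: q₂) = invCount (q₁ ++ q₂) + q₁.countP (x < ·) + q₂.countP (· < x) := by
  induction q₁ with
  | nil => simp only [nil_append, invCount, countP_nil]; omega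
  | cons a q₁ ih =>
    simp only [cons_append, invCount, countP_append, countP_cons, ih]
    split_ifs <;> simp_all <;> omega

theorem neg_one_pow_invCount_swap {R : Type*} [Monoid R] [HasDistribNeg R] {i j : α}
    (hij : i ≠ j) (r s : List α) :
    (-1 : R) ^ invCount (r ++ i :: j :: s) = -(-1) ^ invCount (r ++ j :: i :: s) := by
  have hi := invCount_append_cons r (j :: s) i
  have hj := invCount_append_cons r (i :: s) j
  rw [invCount_append_cons r s j] at hi
  rw [invCount_append_cons r s i] at hj
  simp only [countP_cons] at hi hj
  rcases hij.lt_or_gt with h | h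
  · have : invCount (r ++ j :: i :: s) = invCount (r ++ i :: j :: s) + 1 := by
      simp [h, h.not_gt] at hi hj; omega
    rw [this, pow_succ, mul_neg_one, neg_neg]
  · have : invCount (r ++ i :: j :: s) = invCount (r ++ j :: i :: s) + 1 := by
      simp [h, h.not_gt] at hi hj; omega
    rw [this, pow_succ, mul_neg_one]

theorem invCount_append_append_cons_mod_two {x : α} {q₁ : List α} (hx : x ∉ q₁) (q₂ : List α) :
    invCount (q₁ ++ q₂) % 2
      = (q₁.length + ((q₁ ++ x :: q₂).countP (· < x) + invCount (q₁ ++ x :: q₂))) % 2 := by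
  have hsplit : q₁.countP (· < x) + q₁.countP (x < ·) = q₁.length := by
    rw [length_eq_countP_add_countP (· < x) (l := q₁)]
    congr 1
    refine countP_congr fun y hy => ?_
    have hyx : x ≠ y := fun h => hx (h ▸ hy)
    simp [hyx.le_iff_lt]
  rw [invCount_append_cons, countP_append, countP_cons]
  simp only [lt_irrefl, decide_false, Bool.false_eq_true, if_false]
  omega

end List

namespace AddMonoidHom

variable {A M : Type*} [Semiring A] [AddCommMonoid M]

def sandwichCon (φ : A →+ M) : RingCon A where
  r a b := ∀ x y, φ (x * a * y) = φ (x * b * y)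
  iseqv := ⟨fun _ _ _ => rfl, fun h x y => (h x y).symm, fun h h' x y => (h x y).trans (h' x y)⟩
  add' h h' x y := by simp only [mul_add, add_mul, map_add, h x y, h' x y]
  mul' {a b c d} h h' x y :=
    calc φ (x * (a * c) * y) = φ (x * a * (c * y)) := by simp only [mul_assoc]
      _ = φ (x * b * (c * y)) := h _ _
      _ = φ (x * b * c * y) := by simp only [mul_assoc]
      _ = φ (x * b * d * y) := h' _ _
      _ = φ (x * (b * d) * y) := by simp only [mul_assoc]

theorem eq_of_sandwichCon {φ : A →+ M} {a b : A} (h : φ.sandwichCon a b) : φ a = φ b := by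
  simpa using h 1 1

end AddMonoidHom

theorem RingQuot.ringCon_of_mkRingHom_eq {R : Type*} [Semiring R] {r : R → R → Prop}
    {c : RingCon R} (hc : ∀ ⦃a b⦄, r a b → c a b) {x y : R}
    (h : mkRingHom r x = mkRingHom r y) : c x y := by
  have w : ∀ ⦃a b⦄, r a b → c.mk' a = c.mk' b := fun a b hab => c.eq.mpr (hc hab)
  refine c.eq.mp ?_
  change c.mk' x = c.mk' y
  rw [← lift_mkRingHom_apply c.mk' w x, ← lift_mkRingHom_apply c.mk' w y, h]

namespace FreeAlgebra

variable (R : Type*) {X : Type*} [CommSemiring R]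

def word (l : List X) : FreeAlgebra R X := (l.map (ι R)).prod

variable {R}

@[simp] theorem word_nil : word R ([] : List X) = 1 := rfl

@[simp] theorem word_cons (x : X) (l : List X) : word R (x :: l) = ι R x * word R l :=
  List.prod_cons

theorem word_append (l₁ l₂ : List X) : word R (l₁ ++ l₂) = word R l₁ * word R l₂ := by
  simp [word]

theorem basisFreeMonoid_apply (w : FreeMonoid X) : basisFreeMonoid R X w = word R w.toList := by
  simp [basisFreeMonoid, equivMonoidAlgebraFreeMonoid, word, FreeMonoid.lift_apply]

variable {M : Type*} [AddCommMonoid M] [Module R M]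

noncomputable def wordFunctional (f : List X → M) : FreeAlgebra R X →ₗ[R] M :=
  (basisFreeMonoid R X).constr R fun w => f w.toList

theorem wordFunctional_word (f : List X → M) (l : List X) : wordFunctional f (word R l) = f l := by
  rw [wordFunctional, ← FreeMonoid.toList_ofList l, ← basisFreeMonoid_apply,
    Module.Basis.constr_basis]

theorem sandwichCon_of_word (φ : FreeAlgebra R X →ₗ[R] M) {a b : FreeAlgebra R X}
    (h : ∀ p q : List X, φ (word R p * a * word R q) = φ (word R p * b * word R q)) :
    φ.toAddMonoidHom.sandwichCon a b := by
  intro x y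
  have key := LinearMap.ext_basis (basisFreeMonoid R X) (basisFreeMonoid R X)
    (B := ((LinearMap.mul R _).comp (LinearMap.mulRight R a)).compr₂ φ)
    (B' := ((LinearMap.mul R _).comp (LinearMap.mulRight R b)).compr₂ φ)
    (fun p q => by simpa [basisFreeMonoid_apply] using h p.toList q.toList)
  exact LinearMap.congr_fun₂ key x y

end FreeAlgebra

namespace MasseyPaper

open FreeAlgebra

section KoszulAlgebra

variable {V : Type} [DecidableEq V] (K : SComplex V)

@[simp] theorem mkRK_ι_inl (i : V) : mkRK K (ι ℚ (Sum.inl i)) = uK K i := rfl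

@[simp] theorem mkRK_ι_inr (i : V) : mkRK K (ι ℚ (Sum.inr i)) = vK K i := rfl

theorem mkRK_word (l : List (V ⊕ V)) : mkRK K (word ℚ l) = listMon K l := by
  simp [word, listMon, map_list_prod, Function.comp_def]

theorem listMon_mem_gradePiece (l : List (V ⊕ V)) :
    listMon K l ∈ gradePiece K (l.map genDeg).sum :=
  Submodule.subset_span ⟨l, rfl, rfl⟩

theorem uK_mem_gradePiece (i : V) : uK K i ∈ gradePiece K 1 := by
  simpa [listMon, genDeg] using listMon_mem_gradePiece K [Sum.inl i]

theorem vK_mem_gradePiece (i : V) : vK K i ∈ gradePiece K 2 := by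
  simpa [listMon, genDeg] using listMon_mem_gradePiece K [Sum.inr i]

theorem mul_mem_gradePiece {m n : ℕ} {a b : RK K} (ha : a ∈ gradePiece K m)
    (hb : b ∈ gradePiece K n) : a * b ∈ gradePiece K (m + n) := by
  have hle : gradePiece K m * gradePiece K n ≤ gradePiece K (m + n) := by
    rw [gradePiece, gradePiece, Submodule.span_mul_span, Submodule.span_le]
    rintro _ ⟨_, ⟨l, hl, rfl⟩, _, ⟨l', hl', rfl⟩, rfl⟩
    exact Submodule.subset_span ⟨l ++ l', by simp [hl, hl'], by simp [listMon]⟩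
  exact hle (Submodule.mul_mem_mul ha hb)

theorem vK_mul_uK_mem_gradePiece (i j : V) : vK K i * uK K j ∈ gradePiece K 3 :=
  (mul_mem_gradePiece K (vK_mem_gradePiece K i) (uK_mem_gradePiece K j) : _ ∈ gradePiece K (2 + 1))

theorem vK_mul_uK_mul_uK_mul_uK_mem_gradePiece (a b c e : V) :
    vK K a * (uK K b * (uK K c * uK K e)) ∈ gradePiece K 5 :=
  (mul_mem_gradePiece K (vK_mem_gradePiece K a) (mul_mem_gradePiece K (uK_mem_gradePiece K b)
    (mul_mem_gradePiece K (uK_mem_gradePiece K c) (uK_mem_gradePiece K e))) :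
    _ ∈ gradePiece K (2 + (1 + (1 + 1))))

theorem uK_mul_vK (i j : V) : uK K i * vK K j = vK K j * uK K i := by
  have h := RingQuot.mkAlgHom_rel ℚ (RKRel.uvcomm (K := K) i j)
  rwa [map_mul, map_mul] at h

theorem uK_mul_vK_mul (i j : V) (b : RK K) : uK K i * (vK K j * b) = vK K j * (uK K i * b) := by
  rw [← mul_assoc, uK_mul_vK, mul_assoc]

theorem vK_mul_vK (i j : V) : vK K i * vK K j = vK K j * vK K i := by
  have h := RingQuot.mkAlgHom_rel ℚ (RKRel.vcomm (K := K) i j)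
  rwa [map_mul, map_mul] at h

theorem isMNF_pair {i j : V} (h : {i, j} ∉ K.faces) : IsMNF K {i, j} := by
  refine ⟨h, fun J hJ => ?_⟩
  have hcard : J.card ≤ 1 := by
    have := Finset.card_lt_card hJ
    have := Finset.card_insert_le i {j}
    rw [Finset.card_singleton] at this
    omega
  have : Nonempty V := ⟨i⟩
  obtain ⟨a, ha⟩ := Finset.card_le_one_iff_subset_singleton.mp hcard
  exact K.down_closed (K.singleton_mem a) ha

theorem vK_mul_vK_eq_zero {i j : V} (hij : i ≠ j) (h : {i, j} ∉ K.faces) :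
    vK K i * vK K j = 0 := by
  have hnodup : [i, j].Nodup := by simpa using hij
  have hI : IsMNF K [i, j].toFinset := by simpa using isMNF_pair K h
  have h := RingQuot.mkAlgHom_rel ℚ (RKRel.mnf (K := K) [i, j] hnodup hI)
  simp only [List.map_cons, List.map_nil, List.prod_cons, List.prod_nil, mul_one, map_mul,
    map_zero] at h
  exact h

end KoszulAlgebra

section KoszulDiff

variable {V : Type} [DecidableEq V] {K : SComplex V} {d : RK K →ₗ[ℚ] RK K}

noncomputable def koszulWordDiff : List (V ⊕ V) → FA V
  | [] => 0
  | Sum.inl i :: l => vF i * word ℚ l - uF i * koszulWordDiff l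
  | Sum.inr i :: l => vF i * koszulWordDiff l

namespace IsKoszulDiff

theorem map_one (hd : IsKoszulDiff K d) : d 1 = 0 := by
  have h := hd.2.2.1 0 1 (listMon_mem_gradePiece K []) 1
  simp only [mul_one, pow_zero, one_smul] at h
  simpa using h

theorem map_uK_mul (hd : IsKoszulDiff K d) (i : V) (b : RK K) :
    d (uK K i * b) = vK K i * b - uK K i * d b := by
  rw [hd.2.2.1 1 _ (uK_mem_gradePiece K i), hd.1 i]
  module

theorem map_vK_mul (hd : IsKoszulDiff K d) (i : V) (b : RK K) :
    d (vK K i * b) = vK K i * d b := by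
  rw [hd.2.2.1 2 _ (vK_mem_gradePiece K i), hd.2.1 i]
  simp

theorem map_mkRK_word (hd : IsKoszulDiff K d) :
    ∀ l : List (V ⊕ V), d (mkRK K (word ℚ l)) = mkRK K (koszulWordDiff l)
  | [] => by simp [hd.map_one, koszulWordDiff]
  | Sum.inl i :: l => by
    rw [word_cons, map_mul, mkRK_ι_inl, hd.map_uK_mul, map_mkRK_word hd l, koszulWordDiff,
      map_sub, map_mul, map_mul]
    rfl
  | Sum.inr i :: l => by
    rw [word_cons, map_mul, mkRK_ι_inr, hd.map_vK_mul, map_mkRK_word hd l, koszulWordDiff,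
      map_mul]
    rfl

theorem map_vK_mul_uK_mul_uK_mul_uK (hd : IsKoszulDiff K d) (a b c e : V) :
    d (vK K a * (uK K b * (uK K c * uK K e)))
      = vK K a * (vK K b * (uK K c * uK K e))
        - (vK K a * (vK K c * (uK K b * uK K e)) - vK K a * (vK K e * (uK K b * uK K c))) := by
  rw [hd.map_vK_mul, hd.map_uK_mul, hd.map_uK_mul, hd.1, uK_mul_vK, mul_sub, mul_sub,
    uK_mul_vK_mul, uK_mul_vK_mul, mul_sub]

end IsKoszulDiff

end KoszulDiff

section Letters

variable {V : Type}

def uIdx (l : List (V ⊕ V)) : List V := l.filterMap Sum.getLeft?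

def vIdx (l : List (V ⊕ V)) : List V := l.filterMap Sum.getRight?

@[simp] theorem uIdx_nil : uIdx ([] : List (V ⊕ V)) = [] := rfl
@[simp] theorem vIdx_nil : vIdx ([] : List (V ⊕ V)) = [] := rfl
@[simp] theorem uIdx_cons_inl (i : V) (l : List (V ⊕ V)) : uIdx (.inl i :: l) = i :: uIdx l := rfl
@[simp] theorem uIdx_cons_inr (i : V) (l : List (V ⊕ V)) : uIdx (.inr i :: l) = uIdx l := rfl
@[simp] theorem vIdx_cons_inl (i : V) (l : List (V ⊕ V)) : vIdx (.inl i :: l) = vIdx l := rfl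
@[simp] theorem vIdx_cons_inr (i : V) (l : List (V ⊕ V)) : vIdx (.inr i :: l) = i :: vIdx l := rfl

@[simp] theorem uIdx_append (l₁ l₂ : List (V ⊕ V)) : uIdx (l₁ ++ l₂) = uIdx l₁ ++ uIdx l₂ :=
  List.filterMap_append

@[simp] theorem vIdx_append (l₁ l₂ : List (V ⊕ V)) : vIdx (l₁ ++ l₂) = vIdx l₁ ++ vIdx l₂ :=
  List.filterMap_append

@[simp] theorem genIdx_inl (i : V) : genIdx (Sum.inl i : V ⊕ V) = i := rfl
@[simp] theorem genIdx_inr (i : V) : genIdx (Sum.inr i : V ⊕ V) = i := rfl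

@[simp] theorem vIdx_map_inr (l : List V) : vIdx (l.map Sum.inr) = l := by
  induction l <;> simp_all

theorem map_genIdx_perm : ∀ l : List (V ⊕ V), (l.map genIdx).Perm (vIdx l ++ uIdx l)
  | [] => .nil
  | .inl i :: l => by simpa using ((map_genIdx_perm l).cons i).trans List.perm_middle.symm
  | .inr i :: l => by simpa using (map_genIdx_perm l).cons i

theorem map_genIdx_swap_perm (p q : List (V ⊕ V)) (g g' : V ⊕ V) :
    ((p ++ g :: g' :: q).map genIdx).Perm ((p ++ g' :: g :: q).map genIdx) := by
  simpa using (List.Perm.swap _ _ _).append_left _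

end Letters

section FullWords

variable {V : Type} [Fintype V]

def IsFullWord (l : List (V ⊕ V)) : Prop := (l.map genIdx : Multiset V) = Finset.univ.val

theorem IsFullWord.nodup {l : List (V ⊕ V)} (h : IsFullWord l) : (l.map genIdx).Nodup := by
  have := Finset.univ.nodup (α := V)
  rwa [← h, Multiset.coe_nodup] at this

theorem isFullWord_iff_of_perm {l l' : List (V ⊕ V)} (h : (l.map genIdx).Perm (l'.map genIdx)) :
    IsFullWord l ↔ IsFullWord l' := by
  rw [IsFullWord, IsFullWord, Multiset.coe_eq_coe.mpr h]

theorem IsFullWord.uIdx_nodup {l : List (V ⊕ V)} (h : IsFullWord l) : (uIdx l).Nodup :=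
  (List.nodup_append.mp ((map_genIdx_perm l).nodup_iff.mp h.nodup)).2.1

variable [DecidableEq V]

instance : DecidablePred (IsFullWord (V := V)) := fun _ => inferInstanceAs (Decidable (_ = _))

theorem IsFullWord.toFinset_uIdx {l : List (V ⊕ V)} (h : IsFullWord l) :
    (uIdx l).toFinset = (vIdx l).toFinsetᶜ := by
  have hnd := (map_genIdx_perm l).nodup_iff.mp h.nodup
  ext x
  have hx : x ∈ vIdx l ++ uIdx l := by
    rw [← (map_genIdx_perm l).mem_iff, ← Multiset.mem_coe, h]
    exact Finset.mem_univ x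
  simp only [List.mem_toFinset, Finset.mem_compl]
  rcases List.mem_append.mp hx with hv | hu
  · exact iff_of_false (fun hu => List.disjoint_of_nodup_append hnd hv hu) (not_not.mpr hv)
  · exact iff_of_true hu fun hv => List.disjoint_of_nodup_append hnd hv hu

end FullWords

section CyclePairing

variable {V : Type} [LinearOrder V] [Fintype V]

/-- `c σ` is the weight of the word `v_σ u_{σᶜ}` with the `u`'s in increasing order; the cycle
condition at `σ` says that the induced functional kills `d (v_σ u_{σᶜ})`. -/
def IsKoszulCycle (c : Finset V → ℤ) : Prop :=
  ∀ σ : Finset V, ∑ x ∈ σᶜ, c (insert x σ) * (-1) ^ (σᶜ.filter (· < x)).card = 0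

noncomputable def cyclePairingWord (c : Finset V → ℤ) (l : List (V ⊕ V)) : ℚ :=
  if IsFullWord l then c (vIdx l).toFinset * (-1) ^ (uIdx l).invCount else 0

noncomputable def cyclePairing (c : Finset V → ℤ) : FA V →ₗ[ℚ] ℚ :=
  wordFunctional (cyclePairingWord c)

variable {c : Finset V → ℤ}

theorem cyclePairing_word_mul_word_mul_word (p m q : List (V ⊕ V)) :
    cyclePairing c (word ℚ p * word ℚ m * word ℚ q) = cyclePairingWord c (p ++ m ++ q) := by
  rw [← word_append, ← word_append, cyclePairing, wordFunctional_word]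

theorem cyclePairing_word_mul_pair_mul_word (p q : List (V ⊕ V)) (g g' : V ⊕ V) :
    cyclePairing c (word ℚ p * (ι ℚ g * ι ℚ g') * word ℚ q)
      = cyclePairingWord c (p ++ g :: g' :: q) := by
  rw [show ι ℚ g * ι ℚ g' = word ℚ [g, g'] by simp, cyclePairing_word_mul_word_mul_word]
  simp

theorem cyclePairingWord_eq_zero_of_genIdx_eq (p q : List (V ⊕ V)) {g g' : V ⊕ V}
    (h : genIdx g = genIdx g') : cyclePairingWord c (p ++ g :: g' :: q) = 0 :=
  if_neg fun hfull => by
    have hnd := hfull.nodup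
    simp only [List.map_append, List.map_cons, h] at hnd
    exact (List.nodup_cons.mp (List.nodup_append.mp hnd).2.1).1 List.mem_cons_self

theorem cyclePairingWord_swap_uu (p q : List (V ⊕ V)) (i j : V) :
    cyclePairingWord c (p ++ .inl i :: .inl j :: q)
      = -cyclePairingWord c (p ++ .inl j :: .inl i :: q) := by
  rcases eq_or_ne i j with rfl | hij
  · rw [cyclePairingWord_eq_zero_of_genIdx_eq p q rfl, neg_zero]
  simp only [cyclePairingWord, isFullWord_iff_of_perm (map_genIdx_swap_perm p q _ _)]
  split_ifs
  · simp [List.neg_one_pow_invCount_swap hij]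
  · simp

theorem cyclePairingWord_swap_vv (p q : List (V ⊕ V)) (i j : V) :
    cyclePairingWord c (p ++ .inr i :: .inr j :: q)
      = cyclePairingWord c (p ++ .inr j :: .inr i :: q) := by
  simp only [cyclePairingWord, isFullWord_iff_of_perm (map_genIdx_swap_perm p q _ _),
    vIdx_append, vIdx_cons_inr, uIdx_append, uIdx_cons_inr, List.toFinset_append,
    List.toFinset_cons, Finset.insert_comm i j]

theorem cyclePairingWord_swap_uv (p q : List (V ⊕ V)) (i j : V) :
    cyclePairingWord c (p ++ .inl i :: .inr j :: q)
      = cyclePairingWord c (p ++ .inr j :: .inl i :: q) := by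
  simp only [cyclePairingWord, isFullWord_iff_of_perm (map_genIdx_swap_perm p q _ _),
    vIdx_append, vIdx_cons_inr, vIdx_cons_inl, uIdx_append, uIdx_cons_inr, uIdx_cons_inl]

theorem cyclePairingWord_eq_zero_of_isMNF {K : SComplex V} (hc : ∀ σ, c σ ≠ 0 → σ ∈ K.faces)
    (p q : List (V ⊕ V)) {l : List V} (hl : IsMNF K l.toFinset) :
    cyclePairingWord c (p ++ l.map .inr ++ q) = 0 := by
  have hσ : c (vIdx (p ++ l.map .inr ++ q)).toFinset = 0 := by
    by_contra hne
    refine hl.1 (K.down_closed (hc _ hne) fun x hx => ?_)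
    simp_all
  simp only [cyclePairingWord, hσ, Int.cast_zero, zero_mul, ite_self]

theorem cyclePairing_sandwichCon {K : SComplex V} (hc : ∀ σ, c σ ≠ 0 → σ ∈ K.faces)
    {a b : FA V} (h : RKRel K a b) : (cyclePairing c).toAddMonoidHom.sandwichCon a b := by
  refine sandwichCon_of_word _ fun p q => ?_
  cases h with
  | ucomm i j =>
    rw [uF, uF, mul_neg, neg_mul, map_neg, cyclePairing_word_mul_pair_mul_word,
      cyclePairing_word_mul_pair_mul_word]
    exact cyclePairingWord_swap_uu p q i j
  | vcomm i j =>
    rw [vF, vF, cyclePairing_word_mul_pair_mul_word, cyclePairing_word_mul_pair_mul_word]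
    exact cyclePairingWord_swap_vv p q i j
  | uvcomm i j =>
    rw [uF, vF, cyclePairing_word_mul_pair_mul_word, cyclePairing_word_mul_pair_mul_word]
    exact cyclePairingWord_swap_uv p q i j
  | vsq i =>
    rw [vF, mul_zero, zero_mul, map_zero, cyclePairing_word_mul_pair_mul_word]
    exact cyclePairingWord_eq_zero_of_genIdx_eq p q rfl
  | uv i =>
    rw [uF, vF, mul_zero, zero_mul, map_zero, cyclePairing_word_mul_pair_mul_word]
    exact cyclePairingWord_eq_zero_of_genIdx_eq p q rfl
  | mnf l _ hl =>
    have hword : (l.map vF).prod = word ℚ (l.map .inr) := by rw [word, List.map_map]; rfl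
    rw [hword, mul_zero, zero_mul, map_zero, cyclePairing_word_mul_word_mul_word,
      cyclePairingWord_eq_zero_of_isMNF hc p q hl]

theorem cyclePairing_eq_of_mkRK_eq {K : SComplex V} (hc : ∀ σ, c σ ≠ 0 → σ ∈ K.faces)
    {x y : FA V} (h : mkRK K x = mkRK K y) : cyclePairing c x = cyclePairing c y := by
  refine AddMonoidHom.eq_of_sandwichCon
    (RingQuot.ringCon_of_mkRingHom_eq (fun a b hab => cyclePairing_sandwichCon hc hab) ?_)
  rw [← RingQuot.mkAlgHom_coe ℚ]
  exact h

/-- Up to the sign `(-1) ^ (number of u's before it)`, this is the pairing with the word `m` in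
which a letter `u_x` is replaced by `v_x`; it does not depend on where that letter sits, which
makes the terms of `cyclePairing c (koszulWordDiff m)` collapse. -/
noncomputable def cyclePairingFlip (c : Finset V → ℤ) (m : List (V ⊕ V)) (x : V) : ℚ :=
  if IsFullWord m then
    c (insert x (vIdx m).toFinset) * (-1) ^ ((uIdx m).countP (· < x) + (uIdx m).invCount)
  else 0

theorem cyclePairingWord_append_inr_cons (p l : List (V ⊕ V)) (x : V) :
    cyclePairingWord c (p ++ .inr x :: l)
      = (-1) ^ (uIdx p).length * cyclePairingFlip c (p ++ .inl x :: l) x := by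
  have hmap : (p ++ .inr x :: l).map genIdx = (p ++ .inl x :: l).map genIdx := by simp
  have hv : (vIdx (p ++ .inr x :: l)).toFinset = insert x (vIdx (p ++ .inl x :: l)).toFinset := by
    simp [Finset.union_insert]
  have hfull_iff : IsFullWord (p ++ .inr x :: l) ↔ IsFullWord (p ++ .inl x :: l) :=
    isFullWord_iff_of_perm (by rw [hmap])
  rw [cyclePairingWord, cyclePairingFlip, hv]
  by_cases hfull : IsFullWord (p ++ .inl x :: l)
  · rw [if_pos (hfull_iff.mpr hfull), if_pos hfull]
    have hx : x ∉ uIdx p := fun hx => by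
      have hnd := hfull.nodup
      simp only [List.map_append, List.map_cons, genIdx_inl] at hnd
      exact List.disjoint_of_nodup_append hnd
        ((map_genIdx_perm p).mem_iff.mpr (List.mem_append_right _ hx)) List.mem_cons_self
    simp only [uIdx_append, uIdx_cons_inl, uIdx_cons_inr]
    rw [neg_one_pow_eq_pow_mod_two, List.invCount_append_append_cons_mod_two hx,
      ← neg_one_pow_eq_pow_mod_two, pow_add]
    ring
  · rw [if_neg (hfull_iff.not.mpr hfull), if_neg hfull, mul_zero]

theorem cyclePairing_word_mul_koszulWordDiff : ∀ l p : List (V ⊕ V),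
    cyclePairing c (word ℚ p * koszulWordDiff l)
      = (-1) ^ (uIdx p).length * ((uIdx l).map (cyclePairingFlip c (p ++ l))).sum
  | [], p => by simp [koszulWordDiff]
  | .inl i :: l, p => by
    have h₁ : word ℚ p * (vF i * word ℚ l) = word ℚ (p ++ .inr i :: l) := by
      rw [word_append, word_cons]; rfl
    have h₂ : word ℚ p * (uF i * koszulWordDiff l) = word ℚ (p ++ [.inl i]) * koszulWordDiff l := by
      rw [word_append, ← mul_assoc]; simp [uF]
    rw [koszulWordDiff, mul_sub, map_sub, h₁, h₂, cyclePairing, wordFunctional_word, ← cyclePairing,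
      cyclePairing_word_mul_koszulWordDiff l, cyclePairingWord_append_inr_cons]
    simp [pow_succ]
    ring
  | .inr i :: l, p => by
    have h : word ℚ p * (vF i * koszulWordDiff l) = word ℚ (p ++ [.inr i]) * koszulWordDiff l := by
      rw [word_append, ← mul_assoc]; simp [vF]
    rw [koszulWordDiff, h, cyclePairing_word_mul_koszulWordDiff l]
    simp

theorem sum_map_cyclePairingFlip (hcyc : IsKoszulCycle c) (l : List (V ⊕ V)) :
    ((uIdx l).map (cyclePairingFlip c l)).sum = 0 := by
  by_cases hfull : IsFullWord l
  · have hcount (x : V) :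
        (uIdx l).countP (· < x) = ((vIdx l).toFinsetᶜ.filter (· < x)).card := by
      rw [List.countP_eq_length_filter, ← List.toFinset_card_of_nodup (hfull.uIdx_nodup.filter _),
        List.toFinset_filter, hfull.toFinset_uIdx]
      simp only [decide_eq_true_eq]
    have hσ := congrArg (Int.cast : ℤ → ℚ) (hcyc (vIdx l).toFinset)
    push_cast at hσ
    rw [← List.sum_toFinset _ hfull.uIdx_nodup, hfull.toFinset_uIdx]
    calc ∑ x ∈ (vIdx l).toFinsetᶜ, cyclePairingFlip c l x
        = (∑ x ∈ (vIdx l).toFinsetᶜ, (c (insert x (vIdx l).toFinset) : ℚ)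
            * (-1) ^ ((vIdx l).toFinsetᶜ.filter (· < x)).card) * (-1) ^ (uIdx l).invCount := by
          rw [Finset.sum_mul]
          refine Finset.sum_congr rfl fun x _ => ?_
          rw [cyclePairingFlip, if_pos hfull, hcount, pow_add, mul_assoc]
      _ = 0 := by rw [hσ, zero_mul]
  · have hzero : cyclePairingFlip c l = fun _ => 0 := funext fun _ => if_neg hfull
    simp [hzero]

theorem cyclePairing_koszulWordDiff (hcyc : IsKoszulCycle c) (l : List (V ⊕ V)) :
    cyclePairing c (koszulWordDiff l) = 0 := by
  simpa [sum_map_cyclePairingFlip hcyc] using cyclePairing_word_mul_koszulWordDiff (c := c) l []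

theorem cyclePairing_eq_zero_of_mkRK_eq {K : SComplex V} {d : RK K →ₗ[ℚ] RK K}
    (hd : IsKoszulDiff K d) (hc : ∀ σ, c σ ≠ 0 → σ ∈ K.faces) (hcyc : IsKoszulCycle c)
    {x : FA V} {z : RK K} (h : mkRK K x = d z) : cyclePairing c x = 0 := by
  have hrange : LinearMap.range (d ∘ₗ (mkRK K).toLinearMap)
      ≤ (LinearMap.ker (cyclePairing c)).map (mkRK K).toLinearMap := by
    rw [LinearMap.range_eq_map, ← (basisFreeMonoid ℚ (V ⊕ V)).span_eq, Submodule.map_span,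
      Submodule.span_le]
    rintro _ ⟨_, ⟨w, rfl⟩, rfl⟩
    exact ⟨koszulWordDiff w.toList, cyclePairing_koszulWordDiff hcyc _,
      by simp [basisFreeMonoid_apply, hd.map_mkRK_word]⟩
  obtain ⟨y, rfl⟩ := RingQuot.mkAlgHom_surjective ℚ (RKRel K) z
  obtain ⟨F, hF, hFx⟩ := hrange ⟨y, rfl⟩
  rw [cyclePairing_eq_of_mkRK_eq hc (h.trans hFx.symm)]
  exact hF

end CyclePairing

section TripleMassey

variable {A : Type} [Ring A] [Module ℚ A] {d : A → A} {homog : ℕ → A → Prop} {a : ℕ → A}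

def tripleEntries (a : ℕ → A) (x y : A) : ℕ → ℕ → A
  | 1, 3 => x
  | 2, 4 => y
  | i, _ => a i

theorem triple_index_cases {i j : ℕ} (hi : 1 ≤ i) (hij : i < j) (hj : j ≤ 3 + 1)
    (hne : (i, j) ≠ (1, 3 + 1)) :
    i = 1 ∧ j = 2 ∨ i = 1 ∧ j = 3 ∨ i = 2 ∧ j = 3 ∨ i = 2 ∧ j = 4 ∨ i = 3 ∧ j = 4 := by
  simp only [ne_eq, Prod.mk.injEq] at hne
  omega

theorem DefSys.val_eq_of_three (C : DefSys d homog 3 (fun _ => 3) a) :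
    C.val = C.c 1 2 * C.c 2 4 + C.c 1 3 * C.c 3 4 := by
  rw [DefSys.val, show Finset.Ioo 1 (3 + 1) = {2, 3} by decide, Finset.sum_pair (by decide),
    show sysDeg (fun _ => 3) 1 2 = 3 by decide, show sysDeg (fun _ => 3) 1 3 = 5 by decide]
  simp only [Odd.neg_one_pow (by decide : Odd 3), Odd.neg_one_pow (by decide : Odd 5), neg_one_smul,
    neg_add, neg_neg]

def DefSys.ofTriple (ha : ∀ i, 1 ≤ i → i ≤ 3 → homog 3 (a i) ∧ d (a i) = 0) {x y : A}
    (hx : homog 5 x) (hy : homog 5 y) (hdx : d x = -(a 1 * a 2)) (hdy : d y = -(a 2 * a 3)) :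
    DefSys d homog 3 (fun _ => 3) a where
  c := tripleEntries a x y
  homog_c i j hi hij hj hne := by
    obtain ⟨rfl, rfl⟩ | ⟨rfl, rfl⟩ | ⟨rfl, rfl⟩ | ⟨rfl, rfl⟩ | ⟨rfl, rfl⟩ :=
      triple_index_cases hi hij hj hne
    exacts [(ha 1 le_rfl (by decide)).1, hx, (ha 2 (by decide) (by decide)).1, hy,
      (ha 3 (by decide) le_rfl).1]
  c_diag i hi hi' := by
    obtain rfl | rfl | rfl : i = 1 ∨ i = 2 ∨ i = 3 := by omega
    all_goals rfl
  d_c i j hi hij hj hne := by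
    obtain ⟨rfl, rfl⟩ | ⟨rfl, rfl⟩ | ⟨rfl, rfl⟩ | ⟨rfl, rfl⟩ | ⟨rfl, rfl⟩ :=
      triple_index_cases hi hij hj hne
    all_goals simp only [show Finset.Ioo 1 2 = ∅ by decide, show Finset.Ioo 2 3 = ∅ by decide,
      show Finset.Ioo 3 4 = ∅ by decide, show Finset.Ioo 1 3 = {2} by decide,
      show Finset.Ioo 2 4 = {3} by decide, Finset.sum_empty, Finset.sum_singleton,
      show sysDeg (fun _ => 3) 1 2 = 3 by decide, show sysDeg (fun _ => 3) 2 3 = 3 by decide,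
      Odd.neg_one_pow (by decide : Odd 3), neg_one_smul]
    exacts [(ha 1 le_rfl (by decide)).2, hdx, (ha 2 (by decide) (by decide)).2, hdy,
      (ha 3 (by decide) le_rfl).2]

theorem DefSys.ofTriple_val (ha : ∀ i, 1 ≤ i → i ≤ 3 → homog 3 (a i) ∧ d (a i) = 0) {x y : A}
    (hx : homog 5 x) (hy : homog 5 y) (hdx : d x = -(a 1 * a 2)) (hdy : d y = -(a 2 * a 3)) :
    (DefSys.ofTriple ha hx hy hdx hdy).val = a 1 * y + x * a 3 :=
  DefSys.val_eq_of_three _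

end TripleMassey

theorem DefSys.val_mem_gradePiece {V : Type} [DecidableEq V] {K : SComplex V} {d : RK K → RK K}
    {a : ℕ → RK K} (C : DefSys d (totalHomog K) 3 (fun _ => 3) a) :
    C.val ∈ gradePiece K 8 := by
  have h (i j n : ℕ) (hi : 1 ≤ i) (hij : i < j) (hj : j ≤ 4) (hne : (i, j) ≠ (1, 4))
      (hn : sysDeg (fun _ => 3) i j = n) : C.c i j ∈ gradePiece K n :=
    hn ▸ C.homog_c i j hi hij hj hne
  have h₁ : C.c 1 2 * C.c 2 4 ∈ gradePiece K (3 + 5) := mul_mem_gradePiece K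
    (h 1 2 3 le_rfl (by decide) (by decide) (by decide) (by decide))
    (h 2 4 5 (by decide) (by decide) le_rfl (by decide) (by decide))
  have h₂ : C.c 1 3 * C.c 3 4 ∈ gradePiece K (5 + 3) := mul_mem_gradePiece K
    (h 1 3 5 le_rfl (by decide) (by decide) (by decide) (by decide))
    (h 3 4 3 (by decide) (by decide) le_rfl (by decide) (by decide))
  rw [C.val_eq_of_three]
  exact add_mem h₁ h₂

section Hexagon

variable {d : RK hexagon →ₗ[ℚ] RK hexagon}

theorem mem_hexagon_faces {σ : Finset (Fin 6)} :
    σ ∈ hexagon.faces ↔ ∃ i : Fin 6, σ ⊆ {i, i + 1} := Iff.rfl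

theorem hexagon_vK_mul_vK_eq_zero (i j : Fin 6)
    (h : ¬ ∃ k : Fin 6, {i, j} ⊆ ({k, k + 1} : Finset (Fin 6)) := by decide) :
    vK hexagon i * vK hexagon j = 0 :=
  vK_mul_vK_eq_zero hexagon (fun hij => h ⟨i, by simp [hij]⟩) h

theorem hexagon_vK_mul_vK_mul_eq_zero (i j : Fin 6) (b : RK hexagon)
    (h : ¬ ∃ k : Fin 6, {i, j} ⊆ ({k, k + 1} : Finset (Fin 6)) := by decide) :
    vK hexagon i * (vK hexagon j * b) = 0 := by
  rw [← mul_assoc, hexagon_vK_mul_vK_eq_zero i j h, zero_mul]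

/-- The fundamental cycle of the hexagon; the edge `{0, 5}` carries the sign `-1` because it is
traversed against the vertex order. -/
def hexagonCycle (σ : Finset (Fin 6)) : ℤ :=
  if σ = {0, 5} then -1
  else if σ ∈ ({{0, 1}, {1, 2}, {2, 3}, {3, 4}, {4, 5}} : Finset (Finset (Fin 6))) then 1 else 0

theorem hexagonCycle_isKoszulCycle : IsKoszulCycle hexagonCycle := by
  unfold IsKoszulCycle
  decide

theorem mem_faces_of_hexagonCycle_ne_zero {σ : Finset (Fin 6)} (h : hexagonCycle σ ≠ 0) :
    σ ∈ hexagon.faces := by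
  rw [mem_hexagon_faces]
  revert σ
  decide

def hexagonWord : List (Fin 6 ⊕ Fin 6) := [.inr 0, .inr 1, .inl 3, .inl 4, .inl 2, .inl 5]

theorem cyclePairing_hexagonWord : cyclePairing hexagonCycle (word ℚ hexagonWord) = 1 := by
  rw [cyclePairing, wordFunctional_word, cyclePairingWord, if_pos (by decide),
    show (vIdx hexagonWord).toFinset = {0, 1} by decide,
    show (uIdx hexagonWord).invCount = 2 by decide, show hexagonCycle {0, 1} = 1 by decide]
  norm_num

theorem not_exists_mkRK_hexagonWord_eq_apply (hd : IsKoszulDiff hexagon d) :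
    ¬ ∃ z, mkRK hexagon (word ℚ hexagonWord) = d z := by
  rintro ⟨z, hz⟩
  have h := cyclePairing_eq_zero_of_mkRK_eq hd (fun _ => mem_faces_of_hexagonCycle_ne_zero)
    hexagonCycle_isKoszulCycle hz
  rw [cyclePairing_hexagonWord] at h
  exact one_ne_zero h

theorem hexClass_one : hexClass 1 = vK hexagon 0 * uK hexagon 3 := rfl

theorem hexClass_two : hexClass 2 = vK hexagon 1 * uK hexagon 4 := rfl

theorem hexClass_three : hexClass 3 = vK hexagon 2 * uK hexagon 5 := rfl

theorem hexClass_mem_gradePiece_and_map_eq_zero (hd : IsKoszulDiff hexagon d) (j : ℕ)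
    (hj : 1 ≤ j) (hj' : j ≤ 3) :
    hexClass j ∈ gradePiece hexagon 3 ∧ d (hexClass j) = 0 := by
  obtain rfl | rfl | rfl : j = 1 ∨ j = 2 ∨ j = 3 := by omega
  · rw [hexClass_one, hd.map_vK_mul, hd.1, hexagon_vK_mul_vK_eq_zero 0 3]
    exact ⟨vK_mul_uK_mem_gradePiece _ _ _, rfl⟩
  · rw [hexClass_two, hd.map_vK_mul, hd.1, hexagon_vK_mul_vK_eq_zero 1 4]
    exact ⟨vK_mul_uK_mem_gradePiece _ _ _, rfl⟩
  · rw [hexClass_three, hd.map_vK_mul, hd.1, hexagon_vK_mul_vK_eq_zero 2 5]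
    exact ⟨vK_mul_uK_mem_gradePiece _ _ _, rfl⟩

noncomputable def hexagonC13 : RK hexagon :=
  vK hexagon 0 * (uK hexagon 3 * (uK hexagon 1 * uK hexagon 4))

noncomputable def hexagonC24 : RK hexagon :=
  vK hexagon 1 * (uK hexagon 4 * (uK hexagon 2 * uK hexagon 5))

noncomputable def hexagonC24' : RK hexagon :=
  vK hexagon 2 * (uK hexagon 4 * (uK hexagon 1 * uK hexagon 5))

theorem map_hexagonC13 (hd : IsKoszulDiff hexagon d) :
    d hexagonC13 = -(hexClass 1 * hexClass 2) := by
  rw [hexagonC13, hd.map_vK_mul_uK_mul_uK_mul_uK, hexagon_vK_mul_vK_mul_eq_zero 0 3 _,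
    hexagon_vK_mul_vK_mul_eq_zero 0 4 _, sub_zero, zero_sub, hexClass_one, hexClass_two, mul_assoc,
    uK_mul_vK_mul]

theorem map_hexagonC24 (hd : IsKoszulDiff hexagon d) :
    d hexagonC24 = -(hexClass 2 * hexClass 3) := by
  rw [hexagonC24, hd.map_vK_mul_uK_mul_uK_mul_uK, hexagon_vK_mul_vK_mul_eq_zero 1 4 _,
    hexagon_vK_mul_vK_mul_eq_zero 1 5 _, sub_zero, zero_sub, hexClass_two, hexClass_three,
    mul_assoc, uK_mul_vK_mul]

theorem map_hexagonC24' (hd : IsKoszulDiff hexagon d) :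
    d hexagonC24' = -(hexClass 2 * hexClass 3) := by
  rw [hexagonC24', hd.map_vK_mul_uK_mul_uK_mul_uK, hexagon_vK_mul_vK_mul_eq_zero 2 4 _,
    hexagon_vK_mul_vK_mul_eq_zero 2 5 _, sub_zero, zero_sub, hexClass_two, hexClass_three,
    mul_assoc, uK_mul_vK_mul, ← mul_assoc, vK_mul_vK, mul_assoc]

theorem hexClass_one_mul_hexagonC24 :
    hexClass 1 * hexagonC24 = mkRK hexagon (word ℚ hexagonWord) := by
  rw [mkRK_word]
  simp [hexClass_one, hexagonC24, hexagonWord, listMon, mul_assoc, uK_mul_vK_mul]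

theorem hexClass_one_mul_hexagonC24' : hexClass 1 * hexagonC24' = 0 := by
  rw [hexClass_one, hexagonC24', mul_assoc, uK_mul_vK_mul, hexagon_vK_mul_vK_mul_eq_zero 0 2 _]

theorem hexagonC13_mul_hexClass_three : hexagonC13 * hexClass 3 = 0 := by
  simp only [hexagonC13, hexClass_three, mul_assoc, uK_mul_vK_mul]
  exact hexagon_vK_mul_vK_mul_eq_zero 0 2 _

end Hexagon

/-- For the boundary complex `K` of a hexagon and the classes
`α_j = [v_j u_{j+3}] ∈ H^3(R(K), d)` (`j = 1, 2, 3`), the triple Massey product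
`⟨α_1, α_2, α_3⟩ ⊆ H^8(R(K), d)` is defined, contains the zero class and also a nonzero
class; in particular it is defined but not strictly defined. -/
theorem statement5 (d : RK hexagon →ₗ[ℚ] RK hexagon) (hd : IsKoszulDiff hexagon d) :
    (∀ j : ℕ, 1 ≤ j → j ≤ 3 →
        hexClass j ∈ gradePiece hexagon 3 ∧ d (hexClass j) = 0) ∧
    MasseyDefined (⇑d) (totalHomog hexagon) 3 (fun _ => 3) hexClass ∧
    (∀ C : DefSys (⇑d) (totalHomog hexagon) 3 (fun _ => 3) hexClass,
      C.val ∈ gradePiece hexagon 8) ∧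
    (∃ C : DefSys (⇑d) (totalHomog hexagon) 3 (fun _ => 3) hexClass, ∃ z, C.val = d z) ∧
    (∃ C : DefSys (⇑d) (totalHomog hexagon) 3 (fun _ => 3) hexClass, ¬ ∃ z, C.val = d z) ∧
    ¬ MasseyStrict (⇑d) (totalHomog hexagon) 3 (fun _ => 3) hexClass := by
  have ha := hexClass_mem_gradePiece_and_map_eq_zero hd
  have hC13 : totalHomog hexagon 5 hexagonC13 := vK_mul_uK_mul_uK_mul_uK_mem_gradePiece _ 0 3 1 4
  have hC24 : totalHomog hexagon 5 hexagonC24 := vK_mul_uK_mul_uK_mul_uK_mem_gradePiece _ 1 4 2 5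
  have hC24' : totalHomog hexagon 5 hexagonC24' :=
    vK_mul_uK_mul_uK_mul_uK_mem_gradePiece _ 2 4 1 5
  let C := DefSys.ofTriple ha hC13 hC24 (map_hexagonC13 hd) (map_hexagonC24 hd)
  let C' := DefSys.ofTriple ha hC13 hC24' (map_hexagonC13 hd) (map_hexagonC24' hd)
  have hC : C.val = mkRK hexagon (word ℚ hexagonWord) := (DefSys.ofTriple_val ..).trans <| by
    rw [hexClass_one_mul_hexagonC24, hexagonC13_mul_hexClass_three, add_zero]
  have hC' : C'.val = 0 := (DefSys.ofTriple_val ..).trans <| by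
    rw [hexClass_one_mul_hexagonC24', hexagonC13_mul_hexClass_three, add_zero]
  have hw := not_exists_mkRK_hexagonWord_eq_apply hd
  refine ⟨ha, ⟨C⟩, DefSys.val_mem_gradePiece, ⟨C', 0, by rw [hC', map_zero]⟩, ⟨C, by rwa [hC]⟩,
    fun hstrict => ?_⟩
  obtain ⟨z, hz⟩ := hstrict C C'
  exact hw ⟨z, by rw [← hC, ← hz, hC', sub_zero]⟩

end MasseyPaper
end

section
/- Let n ≥ 2 and let \bar K(n) be the simplicial complex on [2n] whose minimal non-faces are the pairs {k, n+k+i} for 0 ≤ i ≤ n−1, 1 ≤ k ≤ n−i. Then the geometric realization |\bar K(n)| = ⋃_{σ ∈ \bar K(n), σ ≠ ∅} conv{e_i : i ∈ σ} ⊆ ℝ^{2n} (where e_1,…,e_{2n} is the standard basis), equipped with the subspace topology, is a contractible topological space. -/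
namespace MasseyPaper

variable {V : Type} [DecidableEq V]

/-- The simplicial complex `K̄(n)` realized on the vertex set `[2n]` (0-indexed as
`Fin (2n)`): its minimal non-faces are the pairs `{k, n+k+i}`, `0 ≤ i ≤ n−1`,
`1 ≤ k ≤ n−i`, i.e. (0-indexed) the pairs `{x, y}` with `y ≥ n + x`; equivalently the
faces are the subsets `σ` with `y < n + x` for all `x, y ∈ σ`. -/
def barKnN (n : ℕ) : SComplex (Fin (2 * n)) where
  faces := {σ | ∀ x ∈ σ, ∀ y ∈ σ, (y : ℕ) < n + (x : ℕ)}
  empty_mem := by intro x hx; simp at hx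
  down_closed := by
    intro σ τ hσ hsub x hx y hy
    exact hσ x (hsub hx) y (hsub hy)
  singleton_mem := by
    intro v x hx y hy
    have hx' := Finset.mem_singleton.mp hx
    have hy' := Finset.mem_singleton.mp hy
    have h1 : (v : ℕ) < 2 * n := v.isLt
    rw [hx', hy']
    omega


/-- The standard basis vector `e_i ∈ ℝ^V`. -/
def stdPt (V : Type) [DecidableEq V] (i : V) : V → ℝ := fun j => if j = i then 1 else 0

/-- The geometric realization `|K| = ⋃_{∅ ≠ σ ∈ K} conv{e_i : i ∈ σ} ⊆ ℝ^V`. -/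
def geomReal {V : Type} [DecidableEq V] (K : SComplex V) : Set (V → ℝ) :=
  ⋃ σ ∈ {σ : Finset V | σ ∈ K.faces ∧ σ.Nonempty},
    convexHull ℝ {p : V → ℝ | ∃ i ∈ σ, p = stdPt V i}

/-!
The faces of `K̄(n)` are the sets of diameter `< n` in `{0, …, 2n - 1}`. The truncations
`j ↦ min j c` are simplicial maps, and for `n ≥ 2` two consecutive truncations are contiguous:
the union of the images of a face under both is again a face. Contiguous vertex maps induce
maps of geometric realizations joined by a straight-line homotopy, so the identity
(truncation at `2n`) is homotopic to the constant map (truncation at `0`).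
-/

open Finset

section Realization

theorem stdPt_eq_single (i : V) : stdPt V i = Pi.single i 1 := by
  funext j
  simp [stdPt, Pi.single_apply]

open Classical in
noncomputable def vertexSupport {ι : Type} [Fintype ι] (x : ι → ℝ) : Finset ι := {i | x i ≠ 0}

theorem mem_vertexSupport {ι : Type} [Fintype ι] {x : ι → ℝ} {i : ι} :
    i ∈ vertexSupport x ↔ x i ≠ 0 := by
  classical
  simp [vertexSupport]

variable [Fintype V]

theorem mem_geomReal_iff {K : SComplex V} {x : V → ℝ} :
    x ∈ geomReal K ↔ x ∈ stdSimplex ℝ V ∧ vertexSupport x ∈ K.faces := by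
  simp only [geomReal, Set.mem_iUnion, Set.mem_ofPred_eq, exists_prop]
  constructor
  · rintro ⟨σ, ⟨hσ, -⟩, hx⟩
    have hsub : convexHull ℝ {p | ∃ i ∈ σ, p = stdPt V i} ⊆
        stdSimplex ℝ V ∩ {y | ∀ i, y i ≠ 0 → i ∈ σ} := by
      refine convexHull_min ?_ ((convex_stdSimplex ℝ V).inter ?_)
      · rintro _ ⟨i, hi, rfl⟩
        refine ⟨stdPt_eq_single i ▸ single_mem_stdSimplex ℝ i, fun j hj => ?_⟩
        by_contra hji
        exact hj (by simp [stdPt, show j ≠ i by rintro rfl; exact hji hi])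
      · intro y hy z hz a b _ _ _ i hi
        by_contra hiσ
        simp [not_not.mp (mt (hy i) hiσ), not_not.mp (mt (hz i) hiσ)] at hi
    obtain ⟨hsimplex, hσx⟩ := hsub hx
    exact ⟨hsimplex, K.down_closed hσ fun i hi => hσx i (mem_vertexSupport.mp hi)⟩
  · rintro ⟨⟨hnonneg, hsum⟩, hface⟩
    have hsupp_sum : ∑ i ∈ vertexSupport x, x i = 1 := by
      rw [← hsum]
      exact sum_subset (subset_univ _) fun i _ hi => not_not.mp (mt mem_vertexSupport.mpr hi)
    refine ⟨vertexSupport x, ⟨hface, nonempty_of_sum_ne_zero (by rw [hsupp_sum]; norm_num)⟩, ?_⟩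
    have hx : ∑ i ∈ vertexSupport x, x i • stdPt V i = x := by
      funext j
      by_cases hj : x j = 0 <;> simp [stdPt, Finset.sum_apply, mem_vertexSupport, hj]
    have := (convex_convexHull ℝ _).sum_mem (fun i _ => hnonneg i) hsupp_sum
      fun i hi => subset_convexHull ℝ {p | ∃ i ∈ vertexSupport x, p = stdPt V i} ⟨i, hi, rfl⟩
    rwa [hx] at this

theorem stdPt_mem_geomReal (K : SComplex V) (i : V) : stdPt V i ∈ geomReal K := by
  refine mem_geomReal_iff.mpr ⟨stdPt_eq_single i ▸ single_mem_stdSimplex ℝ i, ?_⟩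
  refine K.down_closed (K.singleton_mem i) fun j hj => ?_
  by_contra hji
  exact mem_vertexSupport.mp hj (by simp [stdPt, show j ≠ i from fun h => hji (by simp [h])])

end Realization

section Pushforward

variable {ι κ : Type} [Fintype ι] [DecidableEq κ]

def pushforward (g : ι → κ) (x : ι → ℝ) : κ → ℝ := fun k => ∑ i with g i = k, x i

theorem continuous_pushforward (g : ι → κ) : Continuous (pushforward g) := by
  unfold pushforward
  fun_prop

theorem pushforward_mem_stdSimplex [Fintype κ] (g : ι → κ) {x : ι → ℝ}
    (hx : x ∈ stdSimplex ℝ ι) : pushforward g x ∈ stdSimplex ℝ κ :=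
  ⟨fun _ => sum_nonneg fun i _ => hx.1 i, by simp only [pushforward, sum_fiberwise, hx.2]⟩

theorem vertexSupport_pushforward_subset [Fintype κ] (g : ι → κ) (x : ι → ℝ) :
    vertexSupport (pushforward g x) ⊆ (vertexSupport x).image g := by
  intro k hk
  have hk : ∑ i with g i = k, x i ≠ 0 := (mem_vertexSupport (x := pushforward g x)).mp hk
  obtain ⟨i, hi, hxi⟩ := exists_ne_zero_of_sum_ne_zero hk
  exact mem_image.mpr ⟨i, mem_vertexSupport.mpr hxi, (mem_filter.mp hi).2⟩

end Pushforward

section SimplicialMap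

variable {W : Type} [DecidableEq W]

def IsSimplicialMap (K : SComplex V) (L : SComplex W) (g : V → W) : Prop :=
  ∀ σ ∈ K.faces, σ.image g ∈ L.faces

def AreContiguous (K : SComplex V) (L : SComplex W) (g h : V → W) : Prop :=
  ∀ σ ∈ K.faces, σ.image g ∪ σ.image h ∈ L.faces

variable {K : SComplex V} {L : SComplex W} {g h : V → W}

theorem AreContiguous.isSimplicialMap_left (hgh : AreContiguous K L g h) :
    IsSimplicialMap K L g :=
  fun σ hσ => L.down_closed (hgh σ hσ) subset_union_left

theorem AreContiguous.isSimplicialMap_right (hgh : AreContiguous K L g h) :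
    IsSimplicialMap K L h :=
  fun σ hσ => L.down_closed (hgh σ hσ) subset_union_right

variable [Fintype V] [Fintype W]

theorem segment_subset_geomReal {x y : W → ℝ} (hx : x ∈ geomReal L) (hy : y ∈ geomReal L)
    (hxy : vertexSupport x ∪ vertexSupport y ∈ L.faces) : segment ℝ x y ⊆ geomReal L := by
  rw [mem_geomReal_iff] at hx hy
  intro z hz
  refine mem_geomReal_iff.mpr
    ⟨(convex_stdSimplex ℝ W).segment_subset hx.1 hy.1 hz, L.down_closed hxy fun i hi => ?_⟩
  obtain ⟨a, b, -, -, -, rfl⟩ := hz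
  by_contra h
  simp only [mem_union, mem_vertexSupport, not_or, not_not] at h
  simp [h.1, h.2, mem_vertexSupport] at hi

theorem pushforward_mem_geomReal (hg : IsSimplicialMap K L g) {x : V → ℝ}
    (hx : x ∈ geomReal K) : pushforward g x ∈ geomReal L := by
  rw [mem_geomReal_iff] at hx ⊢
  exact ⟨pushforward_mem_stdSimplex g hx.1,
    L.down_closed (hg _ hx.2) (vertexSupport_pushforward_subset g x)⟩

def realMap (hg : IsSimplicialMap K L g) : C(geomReal K, geomReal L) where
  toFun x := ⟨pushforward g x, pushforward_mem_geomReal hg x.2⟩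
  continuous_toFun := ((continuous_pushforward g).comp continuous_subtype_val).subtype_mk _

theorem realMap_eq_id {f : V → V} (hf : IsSimplicialMap K K f) (hid : ∀ v, f v = v) :
    realMap hf = ContinuousMap.id _ := by
  ext x v
  simp [realMap, pushforward, hid, filter_eq']

theorem realMap_eq_const (hg : IsSimplicialMap K L g) {w : W} (hw : ∀ v, g v = w) :
    realMap hg = ContinuousMap.const _ ⟨stdPt W w, stdPt_mem_geomReal L w⟩ := by
  ext x u
  have hsum : ∑ v, (x : V → ℝ) v = 1 := (mem_geomReal_iff.mp x.2).1.2
  by_cases hu : u = w <;> simp [realMap, pushforward, stdPt, hw, hu, hsum, Ne.symm]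

theorem AreContiguous.segment_pushforward_subset (hgh : AreContiguous K L g h)
    (x : geomReal K) : segment ℝ (pushforward g x) (pushforward h x) ⊆ geomReal L :=
  segment_subset_geomReal (pushforward_mem_geomReal hgh.isSimplicialMap_left x.2)
    (pushforward_mem_geomReal hgh.isSimplicialMap_right x.2)
    (L.down_closed (hgh _ (mem_geomReal_iff.mp x.2).2) (union_subset_union
      (vertexSupport_pushforward_subset g x) (vertexSupport_pushforward_subset h x)))

noncomputable def AreContiguous.homotopy (hgh : AreContiguous K L g h) :
    (realMap hgh.isSimplicialMap_left).Homotopy (realMap hgh.isSimplicialMap_right) where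
  toFun p := ⟨AffineMap.lineMap (pushforward g p.2) (pushforward h p.2) (p.1 : ℝ),
    hgh.segment_pushforward_subset p.2 (lineMap_mem_segment ℝ _ _ p.1.2)⟩
  continuous_toFun := by
    refine Continuous.subtype_mk ?_ _
    simp only [AffineMap.lineMap_apply_module]
    have := continuous_pushforward g
    have := continuous_pushforward h
    fun_prop
  map_zero_left _ := Subtype.ext (AffineMap.lineMap_apply_zero _ _)
  map_one_left _ := Subtype.ext (AffineMap.lineMap_apply_one _ _)

theorem AreContiguous.homotopic (hgh : AreContiguous K L g h) :
    (realMap hgh.isSimplicialMap_left).Homotopic (realMap hgh.isSimplicialMap_right) :=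
  ⟨hgh.homotopy⟩

end SimplicialMap

section Truncation

def truncAt {m : ℕ} (c : ℕ) (j : Fin m) : Fin m := ⟨min j c, (min_le_left _ _).trans_lt j.isLt⟩

theorem isSimplicialMap_truncAt (n c : ℕ) :
    IsSimplicialMap (barKnN n) (barKnN n) (truncAt c) := by
  intro σ hσ
  simp only [barKnN, Set.mem_ofPred_eq, mem_image, truncAt] at hσ ⊢
  rintro _ ⟨a, ha, rfl⟩ _ ⟨b, hb, rfl⟩
  have := hσ a ha b hb
  simp only
  omega

theorem areContiguous_truncAt_succ {n : ℕ} (hn : 2 ≤ n) (c : ℕ) :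
    AreContiguous (barKnN n) (barKnN n) (truncAt (c + 1)) (truncAt c) := by
  intro σ hσ
  simp only [barKnN, Set.mem_ofPred_eq, mem_union, mem_image, truncAt] at hσ ⊢
  rintro _ (⟨a, ha, rfl⟩ | ⟨a, ha, rfl⟩) _ (⟨b, hb, rfl⟩ | ⟨b, hb, rfl⟩) <;>
    have := hσ a ha b hb <;> simp only <;> omega

theorem homotopic_truncAt_zero {n : ℕ} (hn : 2 ≤ n) : ∀ c : ℕ,
    (realMap (isSimplicialMap_truncAt n c)).Homotopic (realMap (isSimplicialMap_truncAt n 0))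
  | 0 => .refl _
  | c + 1 => (areContiguous_truncAt_succ hn c).homotopic.trans (homotopic_truncAt_zero hn c)

end Truncation

/-- For `n ≥ 2`, the geometric realization of `K̄(n)` in `ℝ^{2n}`,
with the subspace topology, is contractible. -/
theorem statement8 (n : ℕ) (hn : 2 ≤ n) :
    ContractibleSpace (geomReal (barKnN n)) := by
  rw [contractible_iff_id_nullhomotopic]
  have hpos : 0 < 2 * n := by omega
  refine ⟨⟨stdPt _ ⟨0, hpos⟩, stdPt_mem_geomReal _ _⟩, ?_⟩
  rw [← realMap_eq_id (isSimplicialMap_truncAt n (2 * n))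
      fun j => Fin.ext (min_eq_left j.isLt.le),
    ← realMap_eq_const (isSimplicialMap_truncAt n 0) (w := ⟨0, hpos⟩)
      fun j => Fin.ext (Nat.min_zero j)]
  exact homotopic_truncAt_zero hn (2 * n)

end MasseyPaper
end

section
/- Let n ≥ 2, s ≥ 1, and let K(n,s) = K(n)(s,…,s,1,…,1) be the simplicial multiwedge of K(n) on the vertex set {11,…,1s,…,n1,…,ns, n+1,…,2n}. Let 1 ≤ v ≤ w ≤ n with w − v ≤ n − 2. Then the induced subcomplex of K(n,s) on the vertex set {v1,…,vs, (v+1)1,…,(v+1)s, …, w1,…,ws} ∪ {n+v, n+v+1, …, n+w} is isomorphic, via the order-preserving relabeling of vertices (pq ↦ (p−v+1)q for v ≤ p ≤ w, 1 ≤ q ≤ s, and n+p ↦ (w−v+1)+(p−v+1) for v ≤ p ≤ w), to the simplicial complex \bar K(w−v+1, s) = \bar K(w−v+1)(s,…,s,1,…,1). -/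
namespace MasseyPaper

variable {V : Type} [DecidableEq V]

/-- The simplicial multiwedge (`J`-construction) `K(J)` of `K`, on the vertex set
`{(i, q) : i ∈ V, 1 ≤ q ≤ J i}`: the faces are the subsets containing no set
`I(J) = {(i, q) : i ∈ I, 1 ≤ q ≤ J i}` with `I` a minimal non-face of `K`. -/
def multiwedge (K : SComplex V) (J : V → ℕ) (hJ : ∀ i, 0 < J i) :
    SComplex (Σ i : V, Fin (J i)) where
  faces := {σ | ∀ I : Finset V, IsMNF K I → ¬ (I.sigma fun _ => Finset.univ) ⊆ σ}
  empty_mem := by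
    intro I hI hsub
    have hne : I.Nonempty := by
      rcases Finset.eq_empty_or_nonempty I with h | h
      · exact absurd (h ▸ K.empty_mem) hI.1
      · exact h
    rcases hne with ⟨i, hi⟩
    have hmem : (⟨i, ⟨0, hJ i⟩⟩ : Σ i : V, Fin (J i)) ∈ I.sigma fun _ => Finset.univ :=
      Finset.mem_sigma.mpr ⟨hi, Finset.mem_univ _⟩
    simpa using hsub hmem
  down_closed := by
    intro σ τ hσ hsub I hI hcon
    exact hσ I hI (hcon.trans hsub)
  singleton_mem := by
    intro w I hI hsub
    have hne : I.Nonempty := by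
      rcases Finset.eq_empty_or_nonempty I with h | h
      · exact absurd (h ▸ K.empty_mem) hI.1
      · exact h
    rcases hne with ⟨i, hi⟩
    obtain ⟨j, hj, hij⟩ : ∃ j ∈ I, j ≠ i := by
      by_contra hcontra
      push_neg at hcontra
      have : I = {i} := Finset.eq_singleton_iff_unique_mem.mpr ⟨hi, fun j hj => hcontra j hj⟩
      exact hI.1 (this ▸ K.singleton_mem i)
    have h1 : (⟨i, ⟨0, hJ i⟩⟩ : Σ i : V, Fin (J i)) ∈ I.sigma fun _ => Finset.univ :=
      Finset.mem_sigma.mpr ⟨hi, Finset.mem_univ _⟩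
    have h2 : (⟨j, ⟨0, hJ j⟩⟩ : Σ i : V, Fin (J i)) ∈ I.sigma fun _ => Finset.univ :=
      Finset.mem_sigma.mpr ⟨hj, Finset.mem_univ _⟩
    have e1 := Finset.mem_singleton.mp (hsub h1)
    have e2 := Finset.mem_singleton.mp (hsub h2)
    exact hij (congrArg Sigma.fst (e2.trans e1.symm))


/-- The simplicial complex `K(n)` on the vertex set `[2n]` (first summand: vertices
`1, …, n`; second summand: vertices `n+1, …, 2n`, all 0-indexed), whose minimal
non-faces are exactly the pairs `{k, n+k+i}`, `0 ≤ i ≤ n−2`, `1 ≤ k ≤ n−i`;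
equivalently the pairs `{Sum.inl a, Sum.inr c}` with `a ≤ c` and `(a, c) ≠ (0, n−1)`. -/
def Kn (n : ℕ) : SComplex (Fin n ⊕ Fin n) where
  faces := {σ | ∀ a c : Fin n, (a : ℕ) ≤ (c : ℕ) → ¬((a : ℕ) = 0 ∧ (c : ℕ) = n - 1) →
      ¬ ({Sum.inl a, Sum.inr c} : Finset (Fin n ⊕ Fin n)) ⊆ σ}
  empty_mem := by
    intro a c _ _ hsub
    simpa using hsub (Finset.mem_insert_self _ _)
  down_closed := by
    intro σ τ hσ hsub a c h1 h2 hcon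
    exact hσ a c h1 h2 (hcon.trans hsub)
  singleton_mem := by
    intro v a c _ _ hsub
    have h1 : Sum.inl a = v := Finset.mem_singleton.mp (hsub (by simp))
    have h2 : Sum.inr c = v := Finset.mem_singleton.mp (hsub (by simp))
    rw [← h2] at h1
    cases h1

/-- The simplicial complex `K̄(n)` on the vertex set `[2n]`, whose minimal non-faces are
exactly the pairs `{k, n+k+i}`, `0 ≤ i ≤ n−1`, `1 ≤ k ≤ n−i`; equivalently the pairs
`{Sum.inl a, Sum.inr c}` with `a ≤ c`. -/
def barKn (n : ℕ) : SComplex (Fin n ⊕ Fin n) where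
  faces := {σ | ∀ a c : Fin n, (a : ℕ) ≤ (c : ℕ) →
      ¬ ({Sum.inl a, Sum.inr c} : Finset (Fin n ⊕ Fin n)) ⊆ σ}
  empty_mem := by
    intro a c _ hsub
    simpa using hsub (Finset.mem_insert_self _ _)
  down_closed := by
    intro σ τ hσ hsub a c h1 hcon
    exact hσ a c h1 (hcon.trans hsub)
  singleton_mem := by
    intro v a c _ hsub
    have h1 : Sum.inl a = v := Finset.mem_singleton.mp (hsub (by simp))
    have h2 : Sum.inr c = v := Finset.mem_singleton.mp (hsub (by simp))
    rw [← h2] at h1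
    cases h1

/-- The multiwedge tuple `J = (s, …, s, 1, …, 1)`. -/
abbrev KnsJ (n s : ℕ) : Fin n ⊕ Fin n → ℕ := Sum.elim (fun _ => s) (fun _ => 1)

/-- `K(n, s) = K(n)(s, …, s, 1, …, 1)`. -/
def Kns (n s : ℕ) (hs : 0 < s) : SComplex (Σ i : Fin n ⊕ Fin n, Fin (KnsJ n s i)) :=
  multiwedge (Kn n) (KnsJ n s) (by intro i; rcases i with a | c; exacts [hs, Nat.one_pos])

/-- `K̄(n, s) = K̄(n)(s, …, s, 1, …, 1)`. -/
def barKns (n s : ℕ) (hs : 0 < s) : SComplex (Σ i : Fin n ⊕ Fin n, Fin (KnsJ n s i)) :=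
  multiwedge (barKn n) (KnsJ n s) (by intro i; rcases i with a | c; exacts [hs, Nat.one_pos])


/-- The order-preserving relabeling of the vertices of `K̄(w−v+1, s)` into the vertex set
of `K(n, s)`: the wedged vertex `(p, q)` is sent to `(p + v − 1, q)` and the unwedged
vertex `c` to `c + v − 1` (all 0-indexed). -/
def relabel (n s v w : ℕ) (hv : 1 ≤ v) (hvw : v ≤ w) (hw : w ≤ n) :
    (Σ i : Fin (w - v + 1) ⊕ Fin (w - v + 1), Fin (KnsJ (w - v + 1) s i)) →
      (Σ i : Fin n ⊕ Fin n, Fin (KnsJ n s i))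
  | ⟨Sum.inl p, q⟩ => ⟨Sum.inl ⟨p.1 + (v - 1), by have := p.2; omega⟩, q⟩
  | ⟨Sum.inr c, q⟩ => ⟨Sum.inr ⟨c.1 + (v - 1), by have := c.2; omega⟩, q⟩


/-! Both `K(n)` and `K̄(m)` are flag complexes whose minimal non-faces are the edges `{a, n+c}`
with `a ≤ c` (for `K(n)` all but `{1, 2n}`). Shifting indices by `v − 1` carries the edges of
`K̄(w−v+1)` exactly onto the edges of `K(n)` among the vertices `v, …, w, n+v, …, n+w`: the
exceptional edge `{1, 2n}` would force `v = 1` and `w = n`, which `w − v ≤ n − 2` excludes.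
The multiwedge commutes with full subcomplexes, since a set `I(J)` lies in the vertex set `U(J)`
exactly when `I ⊆ U`, and the minimal non-faces of `K_U` are those of `K` inside `U`. -/

theorem SComplex.ext {K L : SComplex V} (h : K.faces = L.faces) : K = L := by
  cases K; cases L; cases h; rfl

theorem isMNF_pair_s19 {K : SComplex V} {x y : V} (hxy : x ≠ y) (h : ({x, y} : Finset V) ∉ K.faces) :
    IsMNF K {x, y} := by
  refine ⟨h, fun σ hσ => ?_⟩
  have : Nonempty V := ⟨x⟩
  have hcard : σ.card ≤ 1 := by
    have := Finset.card_lt_card hσ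
    rw [Finset.card_pair hxy] at this
    omega
  obtain ⟨z, hz⟩ := Finset.card_le_one_iff_subset_singleton.mp hcard
  exact K.down_closed (K.singleton_mem z) hz

section EdgeComplex

variable {α β α' β' : Type} [DecidableEq α] [DecidableEq β] [DecidableEq α'] [DecidableEq β']

def edgeComplex (R : α → β → Prop) : SComplex (α ⊕ β) where
  faces := {σ | ∀ a c, R a c → ¬ ({Sum.inl a, Sum.inr c} : Finset (α ⊕ β)) ⊆ σ}
  empty_mem a c _ h := by simpa using h (Finset.mem_insert_self _ _)
  down_closed _ _ hσ hτ a c hR h := hσ a c hR (h.trans hτ)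
  singleton_mem x a c _ h := by
    have ha := Finset.mem_singleton.mp (h (Finset.mem_insert_self _ _))
    have hc := Finset.mem_singleton.mp (h (Finset.mem_insert_of_mem (Finset.mem_singleton_self _)))
    exact Sum.inl_ne_inr (ha.trans hc.symm)

theorem isMNF_edgeComplex_iff {R : α → β → Prop} {I : Finset (α ⊕ β)} :
    IsMNF (edgeComplex R) I ↔ ∃ a c, R a c ∧ I = {Sum.inl a, Sum.inr c} := by
  constructor
  · rintro ⟨hI, hmin⟩
    simp only [edgeComplex, Set.mem_ofPred_eq, not_forall, not_not] at hI
    obtain ⟨a, c, hR, hsub⟩ := hI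
    refine ⟨a, c, hR, (hsub.eq_or_ssubset.resolve_right fun hss => ?_).symm⟩
    exact hmin _ hss a c hR subset_rfl
  · rintro ⟨a, c, hR, rfl⟩
    exact isMNF_pair_s19 Sum.inl_ne_inr fun h => h a c hR subset_rfl

theorem isMNF_edgeComplex_map_iff {R : α → β → Prop} {R' : α' → β' → Prop}
    (f : α ↪ α') (g : β ↪ β') (hR : ∀ a c, R' (f a) (g c) ↔ R a c) (I : Finset (α ⊕ β)) :
    IsMNF (edgeComplex R') (I.map (f.sumMap g)) ↔ IsMNF (edgeComplex R) I := by
  simp only [isMNF_edgeComplex_iff]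
  constructor
  · rintro ⟨a', c', hR', hI⟩
    have ha : Sum.inl a' ∈ I.map (f.sumMap g) := by simp [hI]
    have hc : Sum.inr c' ∈ I.map (f.sumMap g) := by simp [hI]
    obtain ⟨a | a, -, ha⟩ := Finset.mem_map.mp ha <;> simp at ha
    obtain ⟨c | c, -, hc⟩ := Finset.mem_map.mp hc <;> simp at hc
    subst ha hc
    refine ⟨a, c, (hR a c).mp hR', Finset.map_injective (f.sumMap g) ?_⟩
    simp [hI]
  · rintro ⟨a, c, hRac, rfl⟩
    exact ⟨f a, g c, (hR a c).mpr hRac, by simp⟩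

end EdgeComplex

theorem Kn_eq_edgeComplex (n : ℕ) :
    Kn n = edgeComplex fun a c : Fin n => a ≤ c ∧ ¬((a : ℕ) = 0 ∧ (c : ℕ) = n - 1) :=
  SComplex.ext <| by
    ext σ
    simp only [Kn, edgeComplex, Set.mem_ofPred_eq, and_imp]
    rfl

theorem barKn_eq_edgeComplex (n : ℕ) : barKn n = edgeComplex fun a c : Fin n => a ≤ c :=
  rfl

section Multiwedge

variable {U W : Type} {J : U → ℕ} {J' : W → ℕ} (e : U ↪ W) (f : ∀ i, Fin (J i) ≃ Fin (J' (e i)))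

def multiwedgeVertexMap : (Σ i : U, Fin (J i)) → Σ i : W, Fin (J' i) :=
  Sigma.map e fun i => f i

theorem multiwedgeVertexMap_injective : Function.Injective (multiwedgeVertexMap e f) :=
  e.injective.sigma_map fun i => (f i).injective

theorem mem_range_multiwedgeVertexMap (x : Σ i : W, Fin (J' i)) :
    x ∈ Set.range (multiwedgeVertexMap e f) ↔ x.1 ∈ Set.range e := by
  rcases x with ⟨i', q'⟩
  constructor
  · rintro ⟨⟨i, q⟩, h⟩
    exact ⟨i, congrArg Sigma.fst h⟩
  · rintro ⟨i, rfl⟩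
    exact ⟨⟨i, (f i).symm q'⟩, by simp [multiwedgeVertexMap, Sigma.map]⟩

variable [DecidableEq W]

theorem map_sigma_univ_eq_image (I : Finset U) :
    (I.map e).sigma (fun _ => Finset.univ) =
      (I.sigma fun _ => Finset.univ).image (multiwedgeVertexMap e f) := by
  ext ⟨i', q'⟩
  simp only [Finset.mem_sigma, Finset.mem_map, Finset.mem_univ, and_true, Finset.mem_image]
  constructor
  · rintro ⟨i, hi, rfl⟩
    exact ⟨⟨i, (f i).symm q'⟩, hi, by simp [multiwedgeVertexMap, Sigma.map]⟩
  · rintro ⟨⟨i, q⟩, hi, h⟩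
    exact ⟨i, hi, congrArg Sigma.fst h⟩

theorem multiwedge_faces_image_iff [DecidableEq U] {K : SComplex U} {L : SComplex W}
    (hKL : ∀ I, IsMNF L (I.map e) ↔ IsMNF K I) (hJ : ∀ i, 0 < J i) (hJ' : ∀ i, 0 < J' i)
    (σ : Finset (Σ i : U, Fin (J i))) :
    σ.image (multiwedgeVertexMap e f) ∈ (multiwedge L J' hJ').faces ↔
      σ ∈ (multiwedge K J hJ).faces := by
  have fibre_subset_iff : ∀ I : Finset U, (I.map e).sigma (fun _ => Finset.univ) ⊆
      σ.image (multiwedgeVertexMap e f) ↔ I.sigma (fun _ => Finset.univ) ⊆ σ := fun I => by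
    rw [map_sigma_univ_eq_image e f,
      Finset.image_subset_image_iff (multiwedgeVertexMap_injective e f)]
  constructor
  · intro hσ I hI hsub
    exact hσ _ ((hKL I).mpr hI) ((fibre_subset_iff I).mpr hsub)
  · intro hσ I' hI' hsub
    -- every index of `I'` carries a vertex of the image, so `I'` lies in the range of `e`
    have hrange : I' ⊆ (I'.preimage e e.injective.injOn).map e := fun i' hi' => by
      have hfibre : (⟨i', ⟨0, hJ' i'⟩⟩ : Σ i : W, Fin (J' i)) ∈ I'.sigma fun _ => Finset.univ :=
        Finset.mem_sigma.mpr ⟨hi', Finset.mem_univ _⟩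
      obtain ⟨x, -, hx⟩ := Finset.mem_image.mp (hsub hfibre)
      have hx1 : e x.1 = i' := congrArg Sigma.fst hx
      exact Finset.mem_map.mpr ⟨x.1, Finset.mem_preimage.mpr (hx1 ▸ hi'), hx1⟩
    obtain ⟨I, -, rfl⟩ := Finset.subset_map_iff.mp hrange
    exact hσ I ((hKL I).mp hI') ((fibre_subset_iff I).mp hsub)

end Multiwedge

def shiftEmb {m n : ℕ} (k : ℕ) (h : m + k ≤ n) : Fin m ↪ Fin n :=
  (Fin.addNatEmb k).trans (Fin.castLEEmb h)

@[simp]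
theorem coe_shiftEmb {m n k : ℕ} (h : m + k ≤ n) (a : Fin m) : (shiftEmb k h a : ℕ) = a + k :=
  rfl

theorem exists_shiftEmb_eq_iff {m n k : ℕ} (h : m + k ≤ n) (b : Fin n) :
    (∃ a, shiftEmb k h a = b) ↔ k ≤ (b : ℕ) ∧ (b : ℕ) < m + k := by
  constructor
  · rintro ⟨a, rfl⟩
    simp [a.2]
  · rintro ⟨hk, hm⟩
    exact ⟨⟨b - k, by omega⟩, Fin.ext (by simp; omega)⟩

theorem relabel_eq_sigma_map (n s v w : ℕ) (hv : 1 ≤ v) (hvw : v ≤ w) (hwn : w ≤ n) :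
    relabel n s v w hv hvw hwn =
      multiwedgeVertexMap ((shiftEmb (v - 1) (by omega)).sumMap (shiftEmb (v - 1) (by omega)))
        fun i => finCongr (by cases i <;> rfl) := by
  funext ⟨i, q⟩
  cases i <;> rfl

/-- For `n ≥ 2`, `s ≥ 1` and `1 ≤ v ≤ w ≤ n` with `w − v ≤ n − 2`, the
induced subcomplex of `K(n, s)` on the vertex set
`{v1, …, vs, …, w1, …, ws} ∪ {n+v, …, n+w}` is isomorphic, via the order-preserving
relabeling `relabel`, to `K̄(w−v+1, s) = K̄(w−v+1)(s, …, s, 1, …, 1)`: the relabeling is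
injective, its image is exactly that vertex set, and it carries faces to faces in both
directions. -/
theorem statement19 (n s v w : ℕ) (hn : 2 ≤ n) (hs : 0 < s)
    (hv : 1 ≤ v) (hvw : v ≤ w) (hwn : w ≤ n) (hgap : w - v ≤ n - 2) :
    Function.Injective (relabel n s v w hv hvw hwn) ∧
    Finset.univ.image (relabel n s v w hv hvw hwn) =
      Finset.univ.filter (fun x : Σ i : Fin n ⊕ Fin n, Fin (KnsJ n s i) =>
        v ≤ Sum.elim (fun a : Fin n => (a : ℕ)) (fun c : Fin n => (c : ℕ)) x.1 + 1 ∧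
        Sum.elim (fun a : Fin n => (a : ℕ)) (fun c : Fin n => (c : ℕ)) x.1 + 1 ≤ w) ∧
    (∀ σ : Finset (Σ i : Fin (w - v + 1) ⊕ Fin (w - v + 1), Fin (KnsJ (w - v + 1) s i)),
      σ ∈ (barKns (w - v + 1) s hs).faces ↔
      σ.image (relabel n s v w hv hvw hwn) ∈ (Kns n s hs).faces) := by
  have hshift : w - v + 1 + (v - 1) ≤ n := by omega
  set e := shiftEmb (v - 1) hshift
  have hMNF : ∀ I, IsMNF (Kn n) (I.map (e.sumMap e)) ↔ IsMNF (barKn (w - v + 1)) I := by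
    rw [Kn_eq_edgeComplex, barKn_eq_edgeComplex]
    refine isMNF_edgeComplex_map_iff e e fun a c => ?_
    simp only [Fin.le_def, e, coe_shiftEmb]
    omega
  rw [relabel_eq_sigma_map]
  refine ⟨multiwedgeVertexMap_injective _ _, ?_,
    fun σ => (multiwedge_faces_image_iff _ _ hMNF _ _ σ).symm⟩
  ext ⟨i, q⟩
  rw [mem_image_univ_iff_mem_range, mem_range_multiwedgeVertexMap]
  rcases i with i | i <;>
    simp only [Function.Embedding.coe_sumMap, Set.mem_range, Sum.exists, Sum.map_inl, Sum.map_inr,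
      Sum.inl.injEq, Sum.inr.injEq, reduceCtorEq, exists_const, or_false, false_or,
      exists_shiftEmb_eq_iff, Finset.mem_filter, Finset.mem_univ, Sum.elim_inl, Sum.elim_inr,
      true_and] <;>
    omega

end MasseyPaper
end
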